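/- arXiv:2504.21003 — 2 statements merged into one kernel-verified Lean document; each statement's English description precedes it below -/
import Mathlib

section
/- For every positive integer k and real x, the product of cos(x/2^n) for n = 1 to k equals 2^{1-k} times the sum over n = 1 to 2^{k-1} of cos(((n - 1/2)/2^{k-1}) x). -/
/-! Multiplying the partial product by the next factor `cos (x / 2 ^ (k + 1))` and applying the
product-to-sum formula splits each term `cos ((2m + 1) · 2θ)`, `θ = x / 2 ^ (k + 1)`, into
`cos ((4m + 1) θ)` and `cos ((4m + 3) θ)`: the odd multiples of `2θ` become exactly the odd
multiples of `θ`, and the number of terms doubles with each factor. -/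

open Finset Real

theorem Finset.sum_range_two_mul {M : Type*} [AddCommMonoid M] (f : ℕ → M) (N : ℕ) :
    ∑ n ∈ range (2 * N), f n = ∑ m ∈ range N, (f (2 * m) + f (2 * m + 1)) := by
  induction N with
  | zero => simp
  | succ N ih =>
    rw [mul_add_one, sum_range_succ, sum_range_succ, sum_range_succ, ih, add_assoc]

theorem Real.two_mul_cos_odd_mul_two_mul_mul_cos (m : ℕ) (θ : ℝ) :
    2 * cos ((2 * m + 1) * (2 * θ)) * cos θ =
      cos ((2 * (2 * m : ℕ) + 1) * θ) + cos ((2 * (2 * m + 1 : ℕ) + 1) * θ) := by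
  rw [two_mul_cos_mul_cos]
  push_cast
  ring_nf

theorem Real.two_pow_mul_prod_cos_div_two_pow (j : ℕ) (x : ℝ) :
    2 ^ j * ∏ n ∈ range (j + 1), cos (x / 2 ^ (n + 1)) =
      ∑ m ∈ range (2 ^ j), cos ((2 * m + 1) * (x / 2 ^ (j + 1))) := by
  induction j with
  | zero => simp
  | succ j ih =>
    set θ := x / 2 ^ (j + 1 + 1) with hθ_def
    have hθ : x / 2 ^ (j + 1) = 2 * θ := by
      rw [hθ_def, pow_succ _ (j + 1)]
      field_simp
    calc 2 ^ (j + 1) * ∏ n ∈ range (j + 2), cos (x / 2 ^ (n + 1))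
        = 2 * (2 ^ j * ∏ n ∈ range (j + 1), cos (x / 2 ^ (n + 1))) * cos θ := by
          rw [prod_range_succ, pow_succ]
          ring
      _ = ∑ m ∈ range (2 ^ j), 2 * cos ((2 * m + 1) * (2 * θ)) * cos θ := by
          rw [ih, hθ, mul_sum, sum_mul]
      _ = ∑ n ∈ range (2 ^ (j + 1)), cos ((2 * n + 1) * θ) := by
          rw [pow_succ', sum_range_two_mul]
          simp only [two_mul_cos_odd_mul_two_mul_mul_cos]

theorem prod_cos_eq_sum_cos (k : ℕ) (hk : 0 < k) (x : ℝ) :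
    ∏ n ∈ Finset.Icc 1 k, Real.cos (x / (2 : ℝ) ^ n) =
      (1 / (2 : ℝ) ^ (k - 1)) *
        ∑ n ∈ Finset.Icc (1 : ℕ) (2 ^ (k - 1)),
          Real.cos (((n : ℝ) - 1 / 2) / (2 : ℝ) ^ (k - 1) * x) := by
  obtain ⟨j, rfl⟩ : ∃ j, k = j + 1 := Nat.exists_eq_add_one.mpr hk
  rw [Nat.add_sub_cancel, one_div, eq_inv_mul_iff_mul_eq₀ (by positivity),
    ← Ico_add_one_right_eq_Icc, prod_Ico_eq_prod_range, Nat.add_sub_cancel,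
    ← Ico_add_one_right_eq_Icc, sum_Ico_eq_sum_range, Nat.add_sub_cancel]
  simp only [add_comm 1]
  rw [two_pow_mul_prod_cos_div_two_pow]
  refine sum_congr rfl fun m _ ↦ congrArg cos ?_
  rw [pow_succ]
  push_cast
  field_simp
  ring
end

section
/- For y > 0, the imaginary Voigt function L(x,y) = (1/π) ∫_{−∞}^{∞} e^{−t²}(x − t)/(y² + (x − t)²) dt equals (1/√π) ∫₀^∞ e^{−t²/4 − y t} sin(x t) dt. -/
/-!
Write the Cauchy-type kernel as a Laplace transform,
`(x - t) / (y² + (x - t)²) = ∫₀^∞ e^{-ys} sin((x - t)s) ds` (valid since `y > 0`),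
exchange the two integrations (the integrand is dominated by `e^{-t²} e^{-ys}`), and evaluate the
inner Gaussian integral as the imaginary part of a Fourier transform of a Gaussian:
`∫ e^{-t²} sin((x - t)s) dt = √π e^{-s²/4} sin(xs)`.
-/

open MeasureTheory Real Set

theorem integral_exp_neg_mul_mul_sin_Ioi {y : ℝ} (hy : 0 < y) (a : ℝ) :
    ∫ s in Ioi (0 : ℝ), exp (-y * s) * sin (a * s) = a / (y ^ 2 + a ^ 2) := by
  set c : ℂ := -y + a * Complex.I
  have hc : c.re < 0 := by simpa [c] using hy
  have him (s : ℝ) : exp (-y * s) * sin (a * s) = (Complex.exp (c * s)).im := by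
    simp [Complex.exp_im, c, add_mul]
  simp_rw [him]
  refine (integral_im (integrableOn_exp_mul_complex_Ioi hc 0)).trans ?_
  rw [integral_exp_mul_complex_Ioi hc 0]
  simp [c, Complex.div_im, Complex.normSq_apply]
  ring

theorem integral_exp_neg_mul_sq_mul_sin_sub {b : ℝ} (hb : 0 < b) (x s : ℝ) :
    ∫ t : ℝ, exp (-b * t ^ 2) * sin ((x - t) * s) =
      √(π / b) * exp (-s ^ 2 / (4 * b)) * sin (x * s) := by
  have hb' : 0 < (b : ℂ).re := by simpa using hb
  set f : ℝ → ℂ := fun t => Complex.exp (Complex.I * (-s : ℝ) * t) * Complex.exp (-b * t ^ 2)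
  have hf : Integrable f := by
    simpa [f, ← Complex.exp_add, add_comm] using
      integrable_cexp_quadratic hb' (Complex.I * (-s : ℝ)) 0
  have him (t : ℝ) : exp (-b * t ^ 2) * sin ((x - t) * s) =
      (Complex.exp ((x * s : ℝ) * Complex.I) * f t).im := by
    simp only [f, ← Complex.exp_add, Complex.exp_im]
    congr 2
    · simp [← Complex.ofReal_pow]
    · simp [← Complex.ofReal_pow]
      ring
  have hroot : ((π : ℂ) / b) ^ (1 / 2 : ℂ) = (√(π / b) : ℝ) := by
    rw [sqrt_eq_rpow, Complex.ofReal_cpow (by positivity)]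
    push_cast
    rfl
  have hexp : Complex.exp (-((-s : ℝ) : ℂ) ^ 2 / (4 * b)) = (exp (-s ^ 2 / (4 * b)) : ℝ) := by
    push_cast
    ring_nf
  simp_rw [him]
  refine (integral_im (hf.const_mul _)).trans ?_
  rw [integral_const_mul, fourierIntegral_gaussian hb', hroot, RCLike.im_to_complex, hexp,
    ← Complex.ofReal_mul (√(π / b)), Complex.im_mul_ofReal, Complex.exp_ofReal_mul_I_im]
  ring

theorem integrable_exp_neg_sq_mul_exp_neg_mul_mul_sin {y : ℝ} (hy : 0 < y) (x : ℝ) :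
    Integrable (Function.uncurry fun t s => exp (-t ^ 2) * (exp (-y * s) * sin ((x - t) * s)))
      (volume.prod (volume.restrict (Ioi 0))) := by
  have hdom : Integrable (fun p : ℝ × ℝ => exp (-p.1 ^ 2) * exp (-y * p.2))
      (volume.prod (volume.restrict (Ioi 0))) :=
    Integrable.mul_prod (by simpa using integrable_exp_neg_mul_sq one_pos)
      (exp_neg_integrableOn_Ioi 0 hy)
  refine hdom.mono' (Continuous.aestronglyMeasurable (by fun_prop)) (ae_of_all _ fun p => ?_)
  rw [Function.uncurry_apply_pair, ← mul_assoc, norm_mul, norm_of_nonneg (by positivity)]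
  exact mul_le_of_le_one_right (by positivity) (abs_sin_le_one _)

theorem voigt_L_laplace (x y : ℝ) (hy : 0 < y) :
    (1 / Real.pi) * ∫ t : ℝ, Real.exp (-t ^ 2) * (x - t) / (y ^ 2 + (x - t) ^ 2) =
      (1 / Real.sqrt Real.pi) *
        ∫ t in Set.Ioi (0 : ℝ), Real.exp (-t ^ 2 / 4 - y * t) * Real.sin (x * t) := by
  have hgauss (s : ℝ) : ∫ t, exp (-t ^ 2) * (exp (-y * s) * sin ((x - t) * s)) =
      √π * (exp (-s ^ 2 / 4 - y * s) * sin (x * s)) := by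
    calc ∫ t, exp (-t ^ 2) * (exp (-y * s) * sin ((x - t) * s))
        = exp (-y * s) * ∫ t, exp (-1 * t ^ 2) * sin ((x - t) * s) := by
          simp_rw [mul_left_comm _ (exp (-y * s)), integral_const_mul, neg_one_mul]
      _ = √π * (exp (-s ^ 2 / 4 - y * s) * sin (x * s)) := by
          rw [integral_exp_neg_mul_sq_mul_sin_sub one_pos, div_one, mul_one, sub_eq_add_neg,
            exp_add, neg_mul]
          ring
  calc (1 / π) * ∫ t, exp (-t ^ 2) * (x - t) / (y ^ 2 + (x - t) ^ 2)
      = (1 / π) * ∫ t, ∫ s in Ioi 0, exp (-t ^ 2) * (exp (-y * s) * sin ((x - t) * s)) := by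
        simp_rw [integral_const_mul, integral_exp_neg_mul_mul_sin_Ioi hy, mul_div_assoc]
    _ = (1 / π) * ∫ s in Ioi 0, ∫ t, exp (-t ^ 2) * (exp (-y * s) * sin ((x - t) * s)) := by
        rw [integral_integral_swap (integrable_exp_neg_sq_mul_exp_neg_mul_mul_sin hy x)]
    _ = (1 / √π) * ∫ s in Ioi 0, exp (-s ^ 2 / 4 - y * s) * sin (x * s) := by
        simp_rw [hgauss, integral_const_mul, ← mul_assoc]
        congr 1
        field_simp
        rw [sq_sqrt pi_pos.le]
end
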